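/- The infinite series ∑_{k=1}^∞ ( H_k⁴/(3k) - H_{k+1}⁴/(k+1) + H_{k+2}⁴/(k+2) - H_{k+3}⁴/(3(k+3)) ) converges and equals -577/5832. -/

import Mathlib

/-!
Write `u n = H_n⁴ / n` and `d n = u n - u (n + 1)`; the summand is
`(d (k + 1) - 2 d (k + 2) + d (k + 3)) / 3`. Since `H_n ≤ 1 + log n`, `u n → 0`, and since
`H_n → ∞`, `u` is eventually decreasing: the step `H_{n+1} - H_n = 1/(n+1)` multiplies `H_n⁴`
by about `1 + 4/(n H_n)`, less than the factor `1 + 1/n` of the denominator once `H_n > 4`.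
So `d` is eventually nonnegative, `∑_k d (k + j) = u j` converges absolutely, and the series
sums to `(u 1 - 2 u 2 + u 3) / 3 = -577/5832`.
-/

/-- `harm k` is the `k`-th harmonic number `H_k = 1 + 1/2 + ⋯ + 1/k`. -/
noncomputable def harm (k : ℕ) : ℝ := ∑ i ∈ Finset.range k, (1 : ℝ) / (i + 1)

/-- `zeta m = ∑_{k=1}^∞ 1/k^m`, the Riemann zeta function at a natural argument. -/
noncomputable def zeta (m : ℕ) : ℝ := ∑' n : ℕ, (1 : ℝ) / (n + 1) ^ m

open Filter Topology Real

theorem hasSum_sub_succ_of_tendsto_of_eventually_antitone {u : ℕ → ℝ} {l : ℝ}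
    (hu : Tendsto u atTop (𝓝 l)) (hanti : ∀ᶠ k in atTop, u (k + 1) ≤ u k) :
    HasSum (fun k => u k - u (k + 1)) (u 0 - l) := by
  obtain ⟨N, hN⟩ := eventually_atTop.1 hanti
  have hv : Antitone fun k => u (k + N) :=
    antitone_nat_of_succ_le fun k => by
      simpa only [add_right_comm k 1 N] using hN (k + N) (by omega)
  have hsum : Summable fun k => u k - u (k + 1) := by
    rw [← summable_nat_add_iff N]
    refine summable_of_sum_range_le (c := u N - l)
      (fun k => sub_nonneg.2 (hN (k + N) (by omega))) fun n => ?_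
    have htel := Finset.sum_range_sub' (fun k => u (k + N)) n
    simp only [add_right_comm _ 1 N, zero_add] at htel
    have hl : l ≤ u (n + N) := hv.le_of_tendsto (hu.comp (tendsto_add_atTop_nat N)) n
    linarith
  rw [hsum.hasSum_iff_tendsto_nat]
  simp only [Finset.sum_range_sub']
  exact tendsto_const_nhds.sub hu

theorem harm_eq_harmonic (n : ℕ) : harm n = harmonic n := by
  simp [harm, harmonic, one_div]

theorem harm_succ (n : ℕ) : harm (n + 1) = harm n + 1 / (n + 1) := by
  simp [harm, Finset.sum_range_succ]

theorem tendsto_harm_atTop : Tendsto harm atTop atTop :=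
  tendsto_sum_range_one_div_nat_succ_atTop

theorem tendsto_one_add_log_pow_div_atTop (p : ℕ) :
    Tendsto (fun x : ℝ => (1 + log x) ^ p / x) atTop (𝓝 0) := by
  have hlog := ((tendsto_pow_log_div_mul_add_atTop 1 0 p one_ne_zero).comp
    (tendsto_id.const_mul_atTop (exp_pos 1))).const_mul (exp 1)
  rw [mul_zero] at hlog
  refine hlog.congr' ?_
  filter_upwards [eventually_gt_atTop 0] with x hx
  simp only [Function.comp_apply, id, log_mul (exp_pos 1).ne' hx.ne', log_exp]
  field_simp
  ring

theorem harm_nonneg (n : ℕ) : 0 ≤ harm n := by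
  unfold harm; positivity

theorem harm_le_one_add_log (n : ℕ) : harm n ≤ 1 + log n := by
  simpa [harm_eq_harmonic] using harmonic_le_one_add_log n

theorem tendsto_harm_pow_div_atTop (p : ℕ) :
    Tendsto (fun n : ℕ => harm n ^ p / n) atTop (𝓝 0) := by
  refine squeeze_zero (fun n => by have := harm_nonneg n; positivity) (fun n => ?_)
    ((tendsto_one_add_log_pow_div_atTop p).comp tendsto_natCast_atTop_atTop)
  exact div_le_div_of_nonneg_right (pow_le_pow_left₀ (harm_nonneg n) (harm_le_one_add_log n) p)
    n.cast_nonneg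

theorem add_pow_four_mul_le {h e x : ℝ} (hh : 7 ≤ h) (he : 0 ≤ e) (he1 : e ≤ 1)
    (hx : 0 ≤ x) (hex : e * x ≤ 1) : (h + e) ^ 4 * x ≤ h ^ 4 * (x + 1) := by
  have h0 : 0 ≤ h := by linarith
  have hdiff : (h + e) ^ 4 - h ^ 4 ≤ 4 * (h + 1) ^ 3 * e := by
    calc (h + e) ^ 4 - h ^ 4 = ((h + e) ^ 3 + (h + e) ^ 2 * h + (h + e) * h ^ 2 + h ^ 3) * e := by
          ring
      _ ≤ ((h + 1) ^ 3 + (h + 1) ^ 2 * (h + 1) + (h + 1) * (h + 1) ^ 2 + (h + 1) ^ 3) * e := by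
          gcongr <;> linarith
      _ = 4 * (h + 1) ^ 3 * e := by ring
  have hcube : 4 * (h + 1) ^ 3 ≤ h ^ 4 := by
    have : (h + 1) ^ 3 ≤ (8 / 7 * h) ^ 3 := pow_le_pow_left₀ (by linarith) (by linarith) 3
    nlinarith [mul_le_mul_of_nonneg_right hh (pow_nonneg h0 3)]
  calc (h + e) ^ 4 * x = h ^ 4 * x + ((h + e) ^ 4 - h ^ 4) * x := by ring
    _ ≤ h ^ 4 * x + 4 * (h + 1) ^ 3 * e * x := by gcongr
    _ = h ^ 4 * x + 4 * (h + 1) ^ 3 * (e * x) := by ring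
    _ ≤ h ^ 4 * x + 4 * (h + 1) ^ 3 * 1 := by gcongr
    _ ≤ h ^ 4 * (x + 1) := by linarith

theorem harm_pow_four_div_succ_le {n : ℕ} (hn : 7 ≤ harm n) :
    harm (n + 1) ^ 4 / (n + 1 : ℕ) ≤ harm n ^ 4 / n := by
  have hpos : (0 : ℝ) < n := by
    rcases n.eq_zero_or_pos with rfl | h
    · norm_num [harm] at hn
    · exact_mod_cast h
  rw [harm_succ, div_le_div_iff₀ (by positivity) hpos]
  push_cast
  refine add_pow_four_mul_le hn (by positivity) ?_ hpos.le ?_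
  · rw [div_le_one (by positivity)]; linarith
  · rw [one_div_mul_eq_div, div_le_one (by positivity)]; linarith

theorem eventually_harm_pow_four_div_succ_le :
    ∀ᶠ n : ℕ in atTop, harm (n + 1) ^ 4 / (n + 1 : ℕ) ≤ harm n ^ 4 / n :=
  (tendsto_harm_atTop.eventually_ge_atTop 7).mono fun _ => harm_pow_four_div_succ_le

theorem stmt_8 :
    HasSum (fun k : ℕ =>
      harm (k + 1) ^ 4 / (3 * ((k : ℝ) + 1)) - harm (k + 2) ^ 4 / ((k : ℝ) + 2)
        + harm (k + 3) ^ 4 / ((k : ℝ) + 3) - harm (k + 4) ^ 4 / (3 * ((k : ℝ) + 4)))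
      (-577 / 5832) := by
  let u : ℕ → ℝ := fun n => harm n ^ 4 / n
  have htel (j : ℕ) : HasSum (fun k => u (k + j) - u (k + j + 1)) (u j) := by
    have hanti := (tendsto_add_atTop_nat j).eventually eventually_harm_pow_four_div_succ_le
    simpa [add_right_comm _ 1 j] using hasSum_sub_succ_of_tendsto_of_eventually_antitone
      (u := fun k => u (k + j)) ((tendsto_harm_pow_div_atTop 4).comp (tendsto_add_atTop_nat j))
      (by simpa only [u, add_right_comm _ 1 j] using hanti)
  have hval : u 1 / 3 - 2 * (u 2 / 3) + u 3 / 3 = -577 / 5832 := by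
    norm_num [u, harm, Finset.sum_range_succ]
  rw [← hval]
  refine ((((htel 1).div_const 3).sub (((htel 2).div_const 3).mul_left 2)).add
    ((htel 3).div_const 3)).congr_fun fun k => ?_
  simp only [u]
  push_cast
  field_simp
  ring
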